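/- arXiv:2402.17943 — 3 statements merged into one kernel-verified Lean document; each statement's English description precedes it below -/
import Mathlib

section
/- Let ρ(x) = ∏_{i=1}^d ρ_i(x_i) be a product density on 𝒳 = 𝒳_1×⋯×𝒳_d and Φ be a tensorized feature map indexed by a multi-index set 𝒦 ⊂ ℕ^d, with (Φ(x))_{σ(α)} = ∏_{i=1}^d φ^i_{α_i}(x_i) where {φ^ℓ_k} are orthonormal in L²_{ρ_ℓ}(𝒳_ℓ). Then for the SoS function g_A(x) = Φ(x)^⊤ A Φ(x) ρ(x) with A ⪰ 0, the partial integral ∫_{𝒳_ℓ} g_A(x_{−ℓ}, x'_ℓ) dx'_ℓ equals Φ_{−ℓ}(x_{−ℓ})^⊤ A_{−ℓ} Φ_{−ℓ}(x_{−ℓ}) ρ(x_{−ℓ}), where Φ_{−ℓ} is the reduced tensorized feature map on the variables other than ℓ, A_{−ℓ} = P (A ⊙ M) P^⊤ with M_{σ(α)σ(β)} = δ_{α_ℓ, β_ℓ} and P_{σ_{−ℓ}(α_{−ℓ}) σ(β)} = ∏_{k≠ℓ} δ_{α_k, β_k}, and A_{−ℓ} is positive semidefinite. -/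
open MeasureTheory Matrix
open scoped Classical

/-!
Only the `ℓ`-th factor of `Φ(x)ᵀ A Φ(x) ρ(x)` depends on `x_ℓ`, so integrating it out replaces
`φ^ℓ_{α_ℓ} φ^ℓ_{β_ℓ} ρ_ℓ` by `δ_{α_ℓ β_ℓ}` (orthonormality): the result is the quadratic form of
`A ⊙ M` at the vector `c_α = Φ_{−ℓ}(x_{−ℓ})_{α_{−ℓ}}`, i.e. at `Φ_{−ℓ}(x_{−ℓ})ᵀ P`. Positivity of
`A_{−ℓ}` follows from the Schur product theorem, since `M = Qᵀ Q` for the 0/1 matrix `Q` of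
`α ↦ α_ℓ`.
-/

lemma Fintype.prod_update_eq_mul_prod_subtype_ne {ι β M : Type*} [Fintype ι] [DecidableEq ι]
    [CommMonoid M] (f : ι → β → M) (x : ι → β) (ℓ : ι) (t : β) :
    ∏ i, f i (Function.update x ℓ t i) = f ℓ t * ∏ k : {k // k ≠ ℓ}, f k (x k) := by
  rw [Fintype.prod_eq_mul_prod_subtype_ne _ ℓ, Function.update_self]
  congr 1
  exact Finset.prod_congr rfl fun k _ => by rw [Function.update_of_ne k.2]

namespace Matrix

variable {m n R : Type*} [Fintype m]

def ofFun [DecidableEq m] [Zero R] [One R] (g : n → m) : Matrix m n R :=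
  of fun b a => if g a = b then 1 else 0

lemma vecMul_ofFun [DecidableEq m] [NonAssocSemiring R] (g : n → m) (v : m → R) :
    v ᵥ* ofFun g = v ∘ g := by
  funext a
  simp [vecMul, dotProduct, ofFun]

lemma transpose_ofFun_mul_ofFun [Fintype n] [DecidableEq m] [NonAssocSemiring R] (g : n → m) :
    (ofFun g : Matrix m n R)ᵀ * (ofFun g : Matrix m n R)
      = (of fun a b => if g a = g b then 1 else 0 : Matrix n n R) := by
  ext a b
  rw [mul_apply]
  simp [ofFun, eq_comm]

lemma posSemidef_of_ite_apply_eq [Fintype n] {κ : Type*} [DecidableEq κ] (f : n → κ) :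
    (of fun a b => if f a = f b then 1 else 0 : Matrix n n ℝ).PosSemidef := by
  let g : n → Set.range f := fun a => ⟨f a, a, rfl⟩
  have hM : (of fun a b => if f a = f b then 1 else 0 : Matrix n n ℝ)
      = (ofFun g : Matrix _ n ℝ)ᵀ * (ofFun g : Matrix _ n ℝ) := by
    rw [transpose_ofFun_mul_ofFun]
    ext a b
    simp only [of_apply, g, Subtype.ext_iff]
  rw [hM, ← conjTranspose_eq_transpose_of_trivial]
  exact posSemidef_conjTranspose_mul_self _

lemma dotProduct_mul_mul_transpose_mulVec [Fintype n] [CommSemiring R] (P : Matrix m n R)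
    (B : Matrix n n R) (v : m → R) :
    v ⬝ᵥ (P * B * Pᵀ) *ᵥ v = (v ᵥ* P) ⬝ᵥ B *ᵥ (v ᵥ* P) := by
  rw [← mulVec_mulVec, ← mulVec_mulVec, dotProduct_mulVec, mulVec_transpose]

end Matrix

lemma integral_dotProduct_mulVec_of_orthonormal {α n ι : Type*} [MeasurableSpace α]
    [Fintype n] [DecidableEq ι] {μ : Measure α} (φ : ι → α → ℝ) (ρ : α → ℝ)
    (hint : ∀ a b, Integrable (fun t => φ a t * φ b t * ρ t) μ)
    (horth : ∀ a b, ∫ t, φ a t * φ b t * ρ t ∂μ = if a = b then 1 else 0)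
    (f : n → ι) (c : n → ℝ) (A : Matrix n n ℝ) :
    ∫ t, ((fun a => φ (f a) t * c a) ⬝ᵥ A *ᵥ fun a => φ (f a) t * c a) * ρ t ∂μ
      = c ⬝ᵥ (A ⊙ of fun a b => if f a = f b then 1 else 0) *ᵥ c := by
  have hexpand : ∀ t, ((fun a => φ (f a) t * c a) ⬝ᵥ A *ᵥ fun a => φ (f a) t * c a) * ρ t
      = ∑ a, ∑ b, (c a * A a b * c b) * (φ (f a) t * φ (f b) t * ρ t) := by
    intro t
    simp only [dotProduct, mulVec, Finset.sum_mul, Finset.mul_sum]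
    refine Finset.sum_congr rfl fun a _ => Finset.sum_congr rfl fun b _ => ?_
    ring
  simp only [hexpand]
  rw [integral_finsetSum _ fun a _ => integrable_finsetSum _ fun b _ => (hint _ _).const_mul _]
  simp only [integral_finsetSum _ fun b _ => (hint _ _).const_mul _, integral_const_mul, horth,
    dotProduct, mulVec, hadamard_apply, of_apply, Finset.mul_sum]
  refine Finset.sum_congr rfl fun a _ => Finset.sum_congr rfl fun b _ => ?_
  ring

theorem sos_marginalization_one_variable_general
    {d : ℕ} (ℓ : Fin d)
    (ρ : Fin d → ℝ → ℝ) (φ : Fin d → ℕ → ℝ → ℝ)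
    (hint : ∀ a b : ℕ, Integrable (fun t => φ ℓ a t * φ ℓ b t * ρ ℓ t))
    (horth : ∀ a b : ℕ,
      (∫ t, φ ℓ a t * φ ℓ b t * ρ ℓ t) = if a = b then (1 : ℝ) else 0)
    (𝒦 : Finset (Fin d → ℕ))
    (A : Matrix {α // α ∈ 𝒦} {α // α ∈ 𝒦} ℝ) (hA : A.PosSemidef) :
    -- reduced index set
    let Kred : Finset ({k : Fin d // k ≠ ℓ} → ℕ) :=
      𝒦.image (fun α => fun k : {k : Fin d // k ≠ ℓ} => α k)
    -- the matrices M, P and the reduced matrix A₋ℓ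
    let M : Matrix {α // α ∈ 𝒦} {α // α ∈ 𝒦} ℝ :=
      fun a b => if (a : Fin d → ℕ) ℓ = (b : Fin d → ℕ) ℓ then 1 else 0
    let P : Matrix {β // β ∈ Kred} {α // α ∈ 𝒦} ℝ :=
      fun b a => if (fun k : {k : Fin d // k ≠ ℓ} => (a : Fin d → ℕ) k) = (b : _) then 1 else 0
    let Ared : Matrix {β // β ∈ Kred} {β // β ∈ Kred} ℝ := P * (A ⊙ M) * Pᵀ
    -- full and reduced tensorized feature maps
    let Φ : (Fin d → ℝ) → {α // α ∈ 𝒦} → ℝ :=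
      fun x a => ∏ i, φ i ((a : Fin d → ℕ) i) (x i)
    let Φred : (Fin d → ℝ) → {β // β ∈ Kred} → ℝ :=
      fun x b => ∏ k : {k : Fin d // k ≠ ℓ}, φ k ((b : {k : Fin d // k ≠ ℓ} → ℕ) k) (x k)
    (∀ x : Fin d → ℝ,
      (∫ t : ℝ,
        (Φ (Function.update x ℓ t) ⬝ᵥ A.mulVec (Φ (Function.update x ℓ t))) *
          ∏ i, ρ i (Function.update x ℓ t i))
      = (Φred x ⬝ᵥ Ared.mulVec (Φred x)) *
          ∏ k : {k : Fin d // k ≠ ℓ}, ρ k (x k))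
    ∧ Ared.PosSemidef := by
  intro Kred M P Ared Φ Φred
  let restrict : {α // α ∈ 𝒦} → {β // β ∈ Kred} :=
    fun a => ⟨fun k => (a : Fin d → ℕ) k, Finset.mem_image_of_mem _ a.2⟩
  have hP : P = ofFun restrict := by
    ext b a
    simp only [P, ofFun, of_apply, restrict, Subtype.ext_iff]
  have hM : M.PosSemidef := posSemidef_of_ite_apply_eq fun a : {α // α ∈ 𝒦} => (a : Fin d → ℕ) ℓ
  refine ⟨fun x => ?_, ?_⟩
  · simp only [Φ, Fintype.prod_update_eq_mul_prod_subtype_ne, ← mul_assoc]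
    rw [integral_mul_const, integral_dotProduct_mulVec_of_orthonormal _ _ hint horth,
      dotProduct_mul_mul_transpose_mulVec, hP, vecMul_ofFun]
    rfl
  · simpa only [conjTranspose_eq_transpose_of_trivial] using
      (hA.hadamard hM).mul_mul_conjTranspose_same P

/-- Marginalization of a tensorized SoS function over one variable.
For a product reference density `ρ(x) = ∏ ρ_i(x_i)`, a tensorized feature map
`Φ_α(x) = ∏_i φ^i_{α_i}(x_i)` indexed by a multi-index set `𝒦`, with the univariate
family `φ^ℓ` orthonormal in `L²_{ρ_ℓ}`, and `A ⪰ 0`, the partial integral of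
`g_A(x) = Φ(x)ᵀ A Φ(x) ρ(x)` over `x_ℓ` equals
`Φ_{−ℓ}(x_{−ℓ})ᵀ A_{−ℓ} Φ_{−ℓ}(x_{−ℓ}) ρ(x_{−ℓ})` with
`A_{−ℓ} = P (A ⊙ M) Pᵀ`, `M_{αβ} = δ_{α_ℓ β_ℓ}`, `P_{α_{−ℓ} β} = ∏_{k≠ℓ} δ_{α_k β_k}`,
and `A_{−ℓ}` is positive semidefinite. -/
theorem sos_marginalization_one_variable
    {d : ℕ} (ℓ : Fin d)
    (ρ : Fin d → ℝ → ℝ) (φ : Fin d → ℕ → ℝ → ℝ)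
    (hρ : ∀ i t, 0 ≤ ρ i t)
    (hint : ∀ a b : ℕ, Integrable (fun t => φ ℓ a t * φ ℓ b t * ρ ℓ t))
    (horth : ∀ a b : ℕ,
      (∫ t, φ ℓ a t * φ ℓ b t * ρ ℓ t) = if a = b then (1 : ℝ) else 0)
    (𝒦 : Finset (Fin d → ℕ))
    (A : Matrix {α // α ∈ 𝒦} {α // α ∈ 𝒦} ℝ) (hA : A.PosSemidef) :
    -- reduced index set
    let Kred : Finset ({k : Fin d // k ≠ ℓ} → ℕ) :=
      𝒦.image (fun α => fun k : {k : Fin d // k ≠ ℓ} => α k)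
    -- the matrices M, P and the reduced matrix A₋ℓ
    let M : Matrix {α // α ∈ 𝒦} {α // α ∈ 𝒦} ℝ :=
      fun a b => if (a : Fin d → ℕ) ℓ = (b : Fin d → ℕ) ℓ then 1 else 0
    let P : Matrix {β // β ∈ Kred} {α // α ∈ 𝒦} ℝ :=
      fun b a => if (fun k : {k : Fin d // k ≠ ℓ} => (a : Fin d → ℕ) k) = (b : _) then 1 else 0
    let Ared : Matrix {β // β ∈ Kred} {β // β ∈ Kred} ℝ := P * (A ⊙ M) * Pᵀ
    -- full and reduced tensorized feature maps
    let Φ : (Fin d → ℝ) → {α // α ∈ 𝒦} → ℝ :=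
      fun x a => ∏ i, φ i ((a : Fin d → ℕ) i) (x i)
    let Φred : (Fin d → ℝ) → {β // β ∈ Kred} → ℝ :=
      fun x b => ∏ k : {k : Fin d // k ≠ ℓ}, φ k ((b : {k : Fin d // k ≠ ℓ} → ℕ) k) (x k)
    (∀ x : Fin d → ℝ,
      (∫ t : ℝ,
        (Φ (Function.update x ℓ t) ⬝ᵥ A.mulVec (Φ (Function.update x ℓ t))) *
          ∏ i, ρ i (Function.update x ℓ t i))
      = (Φred x ⬝ᵥ Ared.mulVec (Φred x)) *
          ∏ k : {k : Fin d // k ≠ ℓ}, ρ k (x k))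
    ∧ Ared.PosSemidef :=
  sos_marginalization_one_variable_general ℓ ρ φ hint horth 𝒦 A hA
end

section
/- Let π_ℓ, ℓ = 0,…,L be a sequence of (unnormalized) bridging densities with π_0 = ρ (the reference) and π_L the target, and let π̃_ℓ be approximations with π̃_0 = ρ. Suppose: (i) D_α(π_ℓ ‖ π_{ℓ−1}) ≤ η for all 1 ≤ ℓ ≤ L; (ii) there exists ω < 1 with D_α(π_ℓ ‖ π̃_ℓ) ≤ ω D_α(π_ℓ ‖ π̃_{ℓ−1}) for all 1 ≤ ℓ ≤ L and D_α(π_0 ‖ ρ) ≤ ω; (iii) there exists ε ≥ 0 with D_α(π_ℓ ‖ π̃_{ℓ−1}) ≤ (1+ε) D_α(π_ℓ ‖ π_{ℓ−1}) + D_α(π_{ℓ−1} ‖ π̃_{ℓ−1}) for all 1 ≤ ℓ ≤ L. Then D_α(π_L ‖ π̃_L) ≤ ω(1+ε)η / (1 − ω). -/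
/-! The errors `a ℓ = D(π_ℓ ‖ π̃_ℓ)` obey `a ℓ ≤ ω ((1 + ε) η + a (ℓ - 1))` by (ii), (iii) and (i).
The affine contraction `x ↦ ω (c + x)` has fixed point `ω c / (1 - ω)`, and the half-line below a
fixed point is invariant under it, so `a ℓ` stays below `ω (1 + ε) η / (1 - ω)` once `a 1 ≤ ω η` does. -/

theorem forall_le_of_le_mul_add {a : ℕ → ℝ} {ω c C : ℝ} {m L : ℕ} (hω : 0 ≤ ω)
    (hC : ω * (c + C) ≤ C) (hm : a m ≤ C)
    (hstep : ∀ n, m ≤ n → n < L → a (n + 1) ≤ ω * (c + a n)) :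
    ∀ n, m ≤ n → n ≤ L → a n ≤ C := by
  intro n hmn
  induction n, hmn using Nat.le_induction with
  | base => exact fun _ => hm
  | succ n hmn ih =>
    intro hnL
    calc a (n + 1) ≤ ω * (c + a n) := hstep n hmn hnL
      _ ≤ ω * (c + C) := by gcongr; exact ih (by omega)
      _ ≤ C := hC

theorem mul_add_div_one_sub_eq {ω c : ℝ} (hω : ω ≠ 1) :
    ω * (c + ω * c / (1 - ω)) = ω * c / (1 - ω) := by
  have : 1 - ω ≠ 0 := sub_ne_zero.mpr hω.symm
  field_simp
  ring

theorem sequential_transport_convergence_general {X : Type*}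
    (D : X → X → ℝ) (hD_nonneg : ∀ f g, 0 ≤ D f g)
    (L : ℕ) (hL : 1 ≤ L)
    (ρ : X) (π πt : ℕ → X)
    (hπ0 : π 0 = ρ) (hπt0 : πt 0 = ρ)
    (η : ℝ)
    (hbridge : ∀ ℓ, 1 ≤ ℓ → ℓ ≤ L → D (π ℓ) (π (ℓ - 1)) ≤ η)
    (ω : ℝ) (hω0 : 0 ≤ ω) (hω1 : ω < 1)
    (happrox : ∀ ℓ, 1 ≤ ℓ → ℓ ≤ L → D (π ℓ) (πt ℓ) ≤ ω * D (π ℓ) (πt (ℓ - 1)))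
    (ε : ℝ) (hε : 0 ≤ ε)
    (htri : ∀ ℓ, 1 ≤ ℓ → ℓ ≤ L →
      D (π ℓ) (πt (ℓ - 1)) ≤ (1 + ε) * D (π ℓ) (π (ℓ - 1)) + D (π (ℓ - 1)) (πt (ℓ - 1))) :
    D (π L) (πt L) ≤ ω * (1 + ε) * η / (1 - ω) := by
  have hη : 0 ≤ η := (hD_nonneg _ _).trans (hbridge 1 le_rfl hL)
  have hstep : ∀ n, 1 ≤ n → n < L →
      D (π (n + 1)) (πt (n + 1)) ≤ ω * ((1 + ε) * η + D (π n) (πt n)) := by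
    intro n _ hnL
    calc D (π (n + 1)) (πt (n + 1)) ≤ ω * D (π (n + 1)) (πt n) := happrox (n + 1) (by omega) hnL
      _ ≤ ω * ((1 + ε) * D (π (n + 1)) (π n) + D (π n) (πt n)) := by
        gcongr
        simpa using htri (n + 1) (by omega) hnL
      _ ≤ ω * ((1 + ε) * η + D (π n) (πt n)) := by
        gcongr
        simpa using hbridge (n + 1) (by omega) hnL
  have hfirst : D (π 1) (πt 1) ≤ ω * ((1 + ε) * η) / (1 - ω) := by
    have h := happrox 1 le_rfl hL
    rw [Nat.sub_self, hπt0, ← hπ0] at h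
    calc D (π 1) (πt 1) ≤ ω * D (π 1) (π 0) := h
      _ ≤ ω * η := by gcongr; exact hbridge 1 le_rfl hL
      _ ≤ ω * ((1 + ε) * η) / (1 - ω) := by
        rw [le_div_iff₀ (by linarith)]
        nlinarith [mul_nonneg hω0 hη, mul_nonneg (mul_nonneg hω0 hη) hε]
  rw [mul_assoc]
  exact forall_le_of_le_mul_add (a := fun n => D (π n) (πt n)) hω0
    (mul_add_div_one_sub_eq hω1.ne).le hfirst hstep L hL le_rfl

/-- Convergence of sequential transport approximation for α-divergences.
Given bridging densities `π_0 = ρ, …, π_L` and approximations `π̃_0 = ρ, …, π̃_L`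
satisfying (i) `D(π_ℓ‖π_{ℓ−1}) ≤ η`, (ii) `D(π_ℓ‖π̃_ℓ) ≤ ω D(π_ℓ‖π̃_{ℓ−1})` with
`0 ≤ ω < 1` and `D(π_0‖ρ) ≤ ω`, and (iii) the triangular-type inequality with
slack `ε ≥ 0`, we get `D(π_L‖π̃_L) ≤ ω(1+ε)η/(1−ω)`. -/
theorem sequential_transport_convergence {X : Type*}
    (D : X → X → ℝ) (hD_nonneg : ∀ f g, 0 ≤ D f g)
    (L : ℕ) (hL : 1 ≤ L)
    (ρ : X) (π πt : ℕ → X)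
    (hπ0 : π 0 = ρ) (hπt0 : πt 0 = ρ)
    (η : ℝ)
    (hbridge : ∀ ℓ, 1 ≤ ℓ → ℓ ≤ L → D (π ℓ) (π (ℓ - 1)) ≤ η)
    (ω : ℝ) (hω0 : 0 ≤ ω) (hω1 : ω < 1)
    (happrox : ∀ ℓ, 1 ≤ ℓ → ℓ ≤ L → D (π ℓ) (πt ℓ) ≤ ω * D (π ℓ) (πt (ℓ - 1)))
    (hinit : D (π 0) ρ ≤ ω)
    (ε : ℝ) (hε : 0 ≤ ε)
    (htri : ∀ ℓ, 1 ≤ ℓ → ℓ ≤ L →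
      D (π ℓ) (πt (ℓ - 1)) ≤ (1 + ε) * D (π ℓ) (π (ℓ - 1)) + D (π (ℓ - 1)) (πt (ℓ - 1))) :
    D (π L) (πt L) ≤ ω * (1 + ε) * η / (1 - ω) :=
  sequential_transport_convergence_general D hD_nonneg L hL ρ π πt hπ0 hπt0 η hbridge ω hω0 hω1
    happrox ε hε htri
end

section
/- Let ρ(ξ_x, ξ_y) = ρ_x(ξ_x) ρ_y(ξ_y) be a product reference probability density and Q(ξ_x, ξ_y) = (Q_1(ξ_y), Q_2(ξ_y, ξ_x)) a block-triangular diffeomorphism with Q_1 a diffeomorphism in ξ_y. Define π̃(x, y) = Q_♯ ρ(x, y). Then for each fixed y, the map ξ_x ↦ Q_2(Q_1^{−1}(y), ξ_x) pushes forward ρ_x to the conditional density π̃(x | y) = π̃(x, y) / ∫ π̃(x', y) dx'. -/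
/-!
The inverse of `Q` is again block-triangular, so its Jacobian determinant at `(y, x)` factors as
`det D(Q₁⁻¹)(y) · det D_x(Q₂⁻¹)(Q₁⁻¹ y, x)`. The first factor and `ρ_y(Q₁⁻¹ y)` do not depend on
`x`; by the change of variables formula for the bijection `Q₂⁻¹(Q₁⁻¹ y, ·)`, the rest integrates to
`∫ ρ_x = 1`. So the normalising integral is `ρ_y(Q₁⁻¹ y) |det D(Q₁⁻¹)(y)|`, which is positive
because `Q₁ ∘ Q₁⁻¹ = id` makes the Jacobian of `Q₁⁻¹` invertible, and it cancels.
-/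

open MeasureTheory

namespace LinearMap

variable {R M M' : Type*} [CommRing R] [AddCommGroup M] [Module R M] [AddCommGroup M'] [Module R M']
  [Module.Free R M] [Module.Finite R M] [Module.Free R M'] [Module.Finite R M']

theorem det_fst_prod (D : M × M' →ₗ[R] M') : ((fst R M M').prod D).det = (D ∘ₗ inr R M M').det := by
  classical
  let b := Module.Free.chooseBasis R M
  let b' := Module.Free.chooseBasis R M'
  rw [← det_toMatrix (b.prod b'), ← det_toMatrix b',
    ← one_mul (Matrix.det (toMatrix b' b' _)),
    ← Matrix.det_one (n := Module.Free.ChooseBasisIndex R M),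
    ← Matrix.det_fromBlocks_zero₁₂ _ (Matrix.of fun i j => b'.repr (D (b j, 0)) i)]
  congr 1
  ext (i | i) (j | j) <;>
    simp [toMatrix_apply, Matrix.fromBlocks, Module.Basis.prod_apply, Matrix.one_apply,
      Finsupp.single_apply, eq_comm]

end LinearMap

section Calculus

variable {𝕜 E F : Type*} [NontriviallyNormedField 𝕜]
  [NormedAddCommGroup E] [NormedSpace 𝕜 E] [NormedAddCommGroup F] [NormedSpace 𝕜 F]

theorem det_fderiv_ne_zero_of_leftInverse {f g : E → E} {y : E}
    (hg : DifferentiableAt 𝕜 g (f y)) (hf : DifferentiableAt 𝕜 f y)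
    (hgf : Function.LeftInverse g f) :
    (fderiv 𝕜 f y).det ≠ 0 := by
  have hchain : (fderiv 𝕜 g (f y)).comp (fderiv 𝕜 f y) = ContinuousLinearMap.id 𝕜 E := by
    rw [← fderiv_comp y hg hf, show g ∘ f = id from funext hgf, fderiv_id]
  have hdet : (fderiv 𝕜 g (f y)).det * (fderiv 𝕜 f y).det = 1 := by
    rw [ContinuousLinearMap.det, ContinuousLinearMap.det, ← LinearMap.det_comp,
      ← ContinuousLinearMap.toLinearMap_comp, hchain, ContinuousLinearMap.coe_id, LinearMap.det_id]
  exact right_ne_zero_of_mul_eq_one hdet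

theorem det_fderiv_triangular [FiniteDimensional 𝕜 E] [FiniteDimensional 𝕜 F]
    {g : E → E} {h : E → F → F} {y : E} {x : F}
    (hg : DifferentiableAt 𝕜 g y) (hh : DifferentiableAt 𝕜 (fun p : E × F => h p.1 p.2) (g y, x)) :
    (fderiv 𝕜 (fun p : E × F => (g p.1, h (g p.1) p.2)) (y, x)).det
      = (fderiv 𝕜 (h (g y)) x).det * (fderiv 𝕜 g y).det := by
  set H := fderiv 𝕜 (fun p : E × F => h p.1 p.2) (g y, x)
  have hpartial : HasFDerivAt (h (g y)) (H.comp (ContinuousLinearMap.inr 𝕜 E F)) x :=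
    hh.hasFDerivAt.comp x (hasFDerivAt_prodMk_right (g y) x)
  have hshear : HasFDerivAt (fun q : E × F => (q.1, h q.1 q.2))
      ((ContinuousLinearMap.fst 𝕜 E F).prod H) (g y, x) :=
    hasFDerivAt_fst.prodMk hh.hasFDerivAt
  have hbase : HasFDerivAt (fun p : E × F => (g p.1, p.2))
      ((fderiv 𝕜 g y).prodMap (ContinuousLinearMap.id 𝕜 F)) (y, x) :=
    hg.hasFDerivAt.prodMap (y, x) (hasFDerivAt_id x)
  have htriangular : HasFDerivAt (fun p : E × F => (g p.1, h (g p.1) p.2))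
      (((ContinuousLinearMap.fst 𝕜 E F).prod H).comp
        ((fderiv 𝕜 g y).prodMap (ContinuousLinearMap.id 𝕜 F))) (y, x) :=
    hshear.comp (y, x) hbase
  rw [htriangular.fderiv, hpartial.fderiv, ContinuousLinearMap.det,
    ContinuousLinearMap.toLinearMap_comp, LinearMap.det_comp, ContinuousLinearMap.coe_prod,
    ContinuousLinearMap.coe_fst, LinearMap.det_fst_prod, ContinuousLinearMap.coe_prodMap,
    LinearMap.det_prodMap, ContinuousLinearMap.coe_id, LinearMap.det_id, mul_one]
  rfl

end Calculus

theorem integral_abs_det_fderiv_smul_comp_eq_integral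
    {E F : Type*} [NormedAddCommGroup E] [NormedSpace ℝ E] [FiniteDimensional ℝ E]
    [MeasurableSpace E] [BorelSpace E] [NormedAddCommGroup F] [NormedSpace ℝ F]
    (μ : Measure E) [μ.IsAddHaarMeasure] {f : E → E} {f' : E → E →L[ℝ] E}
    (hf' : ∀ x, HasFDerivAt f (f' x) x) (hf : Function.Bijective f) (g : E → F) :
    ∫ x, |(f' x).det| • g (f x) ∂μ = ∫ x, g x ∂μ := by
  have := integral_image_eq_integral_abs_det_fderiv_smul μ MeasurableSet.univ
    (fun x _ => (hf' x).hasFDerivWithinAt) hf.injective.injOn g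
  rwa [Set.image_univ, hf.surjective.range_eq, Measure.restrict_univ, eq_comm] at this

theorem stochastic_map_filter_general {nx ny : ℕ}
    (ρx : (Fin nx → ℝ) → ℝ) (ρy : (Fin ny → ℝ) → ℝ)
    (hρy_pos : ∀ ξ, 0 < ρy ξ)
    (hρx_norm : (∫ ξ, ρx ξ) = 1)
    (Q1 Q1inv : (Fin ny → ℝ) → (Fin ny → ℝ))
    (hQ1 : ContDiff ℝ 1 Q1) (hQ1inv : ContDiff ℝ 1 Q1inv)
    (hQ1_ri : Function.RightInverse Q1inv Q1)
    (Q2 Q2inv : (Fin ny → ℝ) → (Fin nx → ℝ) → (Fin nx → ℝ))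
    (hQ2inv : ContDiff ℝ 1 (fun p : (Fin ny → ℝ) × (Fin nx → ℝ) => Q2inv p.1 p.2))
    (hQ2_li : ∀ ξy, Function.LeftInverse (Q2inv ξy) (Q2 ξy))
    (hQ2_ri : ∀ ξy, Function.RightInverse (Q2inv ξy) (Q2 ξy)) :
    -- inverse of the block-triangular map Q(ξy, ξx) = (Q1 ξy, Q2 ξy ξx)
    let Qinv : (Fin ny → ℝ) × (Fin nx → ℝ) → (Fin ny → ℝ) × (Fin nx → ℝ) :=
      fun p => (Q1inv p.1, Q2inv (Q1inv p.1) p.2)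
    -- pushforward density π̃ = Q_♯ ρ
    let πt : (Fin ny → ℝ) × (Fin nx → ℝ) → ℝ :=
      fun p => (ρy (Qinv p).1 * ρx (Qinv p).2) * |(fderiv ℝ Qinv p).det|
    ∀ (y : Fin ny → ℝ) (x : Fin nx → ℝ),
      πt (y, x) / (∫ x', πt (y, x'))
        = ρx (Q2inv (Q1inv y) x) * |(fderiv ℝ (Q2inv (Q1inv y)) x).det| := by
  intro Qinv πt y x
  set c := Q1inv y
  have hQ2inv_diff : Differentiable ℝ (fun p : (Fin ny → ℝ) × (Fin nx → ℝ) => Q2inv p.1 p.2) :=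
    hQ2inv.differentiable one_ne_zero
  have hQ1inv_diff : Differentiable ℝ Q1inv := hQ1inv.differentiable one_ne_zero
  have hfilter_diff : Differentiable ℝ (Q2inv c) := fun w =>
    (hQ2inv_diff (c, w)).comp w ((differentiableAt_const c).prodMk differentiableAt_id)
  have hjoint : ∀ x', πt (y, x') = ρy c * |(fderiv ℝ Q1inv y).det|
      * (|(fderiv ℝ (Q2inv c) x').det| * ρx (Q2inv c x')) := fun x' => by
    simp only [πt, Qinv, det_fderiv_triangular (hQ1inv_diff y) (hQ2inv_diff (c, x')), abs_mul]
    ring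
  have hfilter_mass : ∫ x', |(fderiv ℝ (Q2inv c) x').det| * ρx (Q2inv c x') = 1 :=
    (integral_abs_det_fderiv_smul_comp_eq_integral volume (fun w => (hfilter_diff w).hasFDerivAt)
      ⟨(hQ2_ri c).injective, (hQ2_li c).surjective⟩ ρx).trans hρx_norm
  have hmarginal : ∫ x', πt (y, x') = ρy c * |(fderiv ℝ Q1inv y).det| := by
    simp_rw [hjoint, integral_const_mul, hfilter_mass, mul_one]
  have hmarginal_pos : 0 < ρy c * |(fderiv ℝ Q1inv y).det| :=
    mul_pos (hρy_pos c) (abs_pos.2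
      (det_fderiv_ne_zero_of_leftInverse ((hQ1.differentiable one_ne_zero) _) (hQ1inv_diff y)
        hQ1_ri))
  rw [hmarginal, hjoint, mul_div_cancel_left₀ _ hmarginal_pos.ne', mul_comm]

/-- Stochastic map filter: if `ρ(ξ_y, ξ_x) = ρ_y(ξ_y) ρ_x(ξ_x)` is a product reference
probability density and `Q(ξ_y, ξ_x) = (Q_1(ξ_y), Q_2(ξ_y, ξ_x))` is a block-triangular
C¹ diffeomorphism, then for each `y` the map `ξ_x ↦ Q_2(Q_1^{-1}(y), ξ_x)` pushes
`ρ_x` forward to the conditional density `π̃(x|y) = π̃(y,x)/∫ π̃(y,x') dx'` of the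
pushforward density `π̃ = Q_♯ ρ`. -/
theorem stochastic_map_filter {nx ny : ℕ}
    (ρx : (Fin nx → ℝ) → ℝ) (ρy : (Fin ny → ℝ) → ℝ)
    (hρx_pos : ∀ ξ, 0 < ρx ξ) (hρy_pos : ∀ ξ, 0 < ρy ξ)
    (hρx_int : Integrable ρx) (hρy_int : Integrable ρy)
    (hρx_norm : (∫ ξ, ρx ξ) = 1) (hρy_norm : (∫ ξ, ρy ξ) = 1)
    (Q1 Q1inv : (Fin ny → ℝ) → (Fin ny → ℝ))
    (hQ1 : ContDiff ℝ 1 Q1) (hQ1inv : ContDiff ℝ 1 Q1inv)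
    (hQ1_li : Function.LeftInverse Q1inv Q1)
    (hQ1_ri : Function.RightInverse Q1inv Q1)
    (Q2 Q2inv : (Fin ny → ℝ) → (Fin nx → ℝ) → (Fin nx → ℝ))
    (hQ2 : ContDiff ℝ 1 (fun p : (Fin ny → ℝ) × (Fin nx → ℝ) => Q2 p.1 p.2))
    (hQ2inv : ContDiff ℝ 1 (fun p : (Fin ny → ℝ) × (Fin nx → ℝ) => Q2inv p.1 p.2))
    (hQ2_li : ∀ ξy, Function.LeftInverse (Q2inv ξy) (Q2 ξy))
    (hQ2_ri : ∀ ξy, Function.RightInverse (Q2inv ξy) (Q2 ξy)) :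
    -- inverse of the block-triangular map Q(ξy, ξx) = (Q1 ξy, Q2 ξy ξx)
    let Qinv : (Fin ny → ℝ) × (Fin nx → ℝ) → (Fin ny → ℝ) × (Fin nx → ℝ) :=
      fun p => (Q1inv p.1, Q2inv (Q1inv p.1) p.2)
    -- pushforward density π̃ = Q_♯ ρ
    let πt : (Fin ny → ℝ) × (Fin nx → ℝ) → ℝ :=
      fun p => (ρy (Qinv p).1 * ρx (Qinv p).2) * |(fderiv ℝ Qinv p).det|
    ∀ (y : Fin ny → ℝ) (x : Fin nx → ℝ),
      πt (y, x) / (∫ x', πt (y, x'))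
        = ρx (Q2inv (Q1inv y) x) * |(fderiv ℝ (Q2inv (Q1inv y)) x).det| :=
  stochastic_map_filter_general ρx ρy hρy_pos hρx_norm Q1 Q1inv hQ1 hQ1inv hQ1_ri Q2 Q2inv hQ2inv
    hQ2_li hQ2_ri
end
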